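/- The map N(ρ) = ½(Tr ρ)·𝟙 − ½ρᵀ on 3×3 complex matrices (the Werner–Holevo channel in dimension 3) is a unital, trace-preserving, completely positive map that is not a mixed-unitary channel. -/

import Mathlib

open Matrix Kronecker Finset
open scoped ComplexConjugate Classical ComplexOrder

noncomputable section

/-- Density matrix (outer product) of a vector. -/
def dmv {n : Type*} (v : n → ℂ) : Matrix n n ℂ :=
  Matrix.of fun i j => v i * conj (v j)

/-- Outer product `|u⟩⟨v|`. -/
def outer {n : Type*} (u v : n → ℂ) : Matrix n n ℂ :=
  Matrix.of fun i j => u i * conj (v j)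

/-- Largest eigenvalue of a (Hermitian) matrix. -/
def maxEig {n : Type*} [Fintype n] [DecidableEq n] (A : Matrix n n ℂ) : ℝ :=
  if h : A.IsHermitian then ⨆ i, h.eigenvalues i else 0

/-- Sum of the `k` largest eigenvalues of a Hermitian matrix. -/
def topSum {n : Type*} [Fintype n] [DecidableEq n] (A : Matrix n n ℂ) (k : ℕ) : ℝ :=
  if h : A.IsHermitian then
    sSup {x : ℝ | ∃ s : Finset n, s.card = k ∧ x = ∑ i ∈ s, h.eigenvalues i}
  else 0

/-- Majorization of Hermitian operators: `A ≺ B` (possibly on different spaces):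
every partial sum of the `k` largest eigenvalues of `A` is at most that of `B`,
and the traces agree. -/
def Maj {m n : Type*} [Fintype m] [DecidableEq m] [Fintype n] [DecidableEq n]
    (A : Matrix m m ℂ) (B : Matrix n n ℂ) : Prop :=
  (∀ k : ℕ, topSum A k ≤ topSum B k) ∧ A.trace = B.trace

/-- Total matrix square root: the positive square root for PSD matrices, `0` otherwise. -/
def msqrt {n : Type*} [Fintype n] [DecidableEq n] (A : Matrix n n ℂ) : Matrix n n ℂ :=
  if h : A.PosSemidef then
    h.1.eigenvectorUnitary.1 * diagonal (fun i => ((Real.sqrt (h.1.eigenvalues i) : ℝ) : ℂ)) *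
      (star h.1.eigenvectorUnitary : Matrix n n ℂ)
  else 0

/-- Trace norm (sum of singular values). -/
def traceNorm {n : Type*} [Fintype n] [DecidableEq n] (A : Matrix n n ℂ) : ℝ :=
  ((msqrt (Aᴴ * A)).trace).re

/-- Fidelity `F(ρ,σ) = ‖√ρ √σ‖₁`. -/
def fid {n : Type*} [Fintype n] [DecidableEq n] (ρ σ : Matrix n n ℂ) : ℝ :=
  traceNorm (msqrt ρ * msqrt σ)

/-- Purified distance `P(ρ,σ) = √(1 − F²(ρ,σ))`. -/
def pd {n : Type*} [Fintype n] [DecidableEq n] (ρ σ : Matrix n n ℂ) : ℝ :=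
  Real.sqrt (1 - fid ρ σ ^ 2)

/-- Choi matrix of a map on matrices. -/
def choi {m n : Type*} [Fintype m] [DecidableEq m]
    (N : Matrix m m ℂ → Matrix n n ℂ) : Matrix (m × n) (m × n) ℂ :=
  Matrix.of fun p q => N (Matrix.single p.1 q.1 1) p.2 q.2

/-- A map is mixed-unitary if it is a convex combination of unitary conjugations. -/
def IsMixedUnitary {n : Type*} [Fintype n] [DecidableEq n]
    (N : Matrix n n ℂ → Matrix n n ℂ) : Prop :=
  ∃ (m : ℕ) (p : Fin m → ℝ) (U : Fin m → Matrix n n ℂ),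
    (∀ i, 0 ≤ p i) ∧ (∑ i, p i = 1) ∧ (∀ i, U i ∈ Matrix.unitaryGroup n ℂ) ∧
    ∀ ρ, N ρ = ∑ i, (p i : ℂ) • (U i * ρ * (U i)ᴴ)

/-- `id_R ⊗ M` acting blockwise on a matrix on `R × S`. -/
def idTensor {R S T : Type*} (M : Matrix S S ℂ →ₗ[ℂ] Matrix T T ℂ)
    (ρ : Matrix (R × S) (R × S) ℂ) : Matrix (R × T) (R × T) ℂ :=
  Matrix.of fun p q => M (Matrix.of fun s s' => ρ (p.1, s) (q.1, s')) p.2 q.2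

end

/-!
The Werner–Holevo map in dimension `n` is `ρ ↦ (Tr ρ • 1 - ρᵀ) / (n - 1)`. Its Choi matrix is
`(1 - W) / (n - 1)` with `W` the swap of the two tensor factors; since `W` is a Hermitian
involution, `(1 - W) / 2` is an orthogonal projection (onto the antisymmetric subspace), so the
Choi matrix is positive semidefinite.

If the map were `ρ ↦ ∑ pᵢ Uᵢ ρ Uᵢᴴ`, its Choi matrix would be `∑ pᵢ |vᵢ⟩⟨vᵢ|` with `vᵢ` the
vectorisation of `Uᵢᵀ`. As the Choi matrix annihilates symmetric vectors, every `vᵢ` with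
`pᵢ ≠ 0` is orthogonal to them, i.e. `Uᵢᵀ = -Uᵢ`. In odd dimension this forces
`det Uᵢ = det Uᵢᵀ = -det Uᵢ`, so `Uᵢ` is singular and cannot be unitary.
-/

variable {n : Type*} [Fintype n] [DecidableEq n]

theorem posSemidef_one_sub_of_isHermitian_of_mul_self_eq_one {m : Type*} [Fintype m]
    [DecidableEq m] {W : Matrix m m ℂ} (hW : W.IsHermitian) (hW2 : W * W = 1) :
    (1 - W).PosSemidef := by
  have : 1 - W = (2 : ℂ)⁻¹ • ((1 - W)ᴴ * (1 - W)) := by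
    simp only [conjTranspose_sub, conjTranspose_one, hW.eq, sub_mul, mul_sub, one_mul, mul_one, hW2]
    module
  rw [this]
  exact (posSemidef_conjTranspose_mul_self _).smul (inv_nonneg.2 zero_le_two)

theorem prodComm_mul_self (α : Type*) :
    (Equiv.prodComm α α : Equiv.Perm (α × α)) * Equiv.prodComm α α = 1 :=
  Equiv.ext fun _ => rfl

theorem det_eq_zero_of_transpose_eq_neg {R : Type*} [CommRing R] [IsAddTorsionFree R]
    (hn : Odd (Fintype.card n)) {A : Matrix n n R} (hA : Aᵀ = -A) : A.det = 0 := by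
  rw [← self_eq_neg]
  conv_lhs => rw [← det_transpose, hA, det_neg, hn.neg_one_pow, neg_one_mul]

theorem star_dotProduct_dmv_mulVec {m : Type*} [Fintype m] (v x : m → ℂ) :
    star x ⬝ᵥ (dmv v *ᵥ x) = star (star v ⬝ᵥ x) * (star v ⬝ᵥ x) := by
  rw [show dmv v = vecMulVec v (star v) from rfl, vecMulVec_mulVec, dotProduct_smul, op_smul_eq_mul,
    star_dotProduct]

theorem star_dotProduct_eq_zero_of_sum_dmv_mulVec_eq_zero {m ι : Type*} [Fintype m] [Fintype ι]
    {p : ι → ℝ} (hp : ∀ i, 0 ≤ p i) {v : ι → m → ℂ} {x : m → ℂ}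
    (hx : (∑ i, (p i : ℂ) • dmv (v i)) *ᵥ x = 0) {i : ι} (hi : p i ≠ 0) :
    star (v i) ⬝ᵥ x = 0 := by
  have hsum : ∑ j, (p j : ℂ) * (star (star (v j) ⬝ᵥ x) * (star (v j) ⬝ᵥ x)) = 0 := by
    simpa [sum_mulVec, dotProduct_sum, smul_mulVec, dotProduct_smul, star_dotProduct_dmv_mulVec]
      using congrArg (star x ⬝ᵥ ·) hx
  have hnonneg : ∀ j ∈ univ, 0 ≤ (p j : ℂ) * (star (star (v j) ⬝ᵥ x) * (star (v j) ⬝ᵥ x)) :=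
    fun j _ => mul_nonneg (by exact_mod_cast hp j) (star_mul_self_nonneg _)
  have hi0 := (sum_eq_zero_iff_of_nonneg hnonneg).1 hsum i (mem_univ i)
  simpa [hi] using hi0

theorem choi_eq_sum_dmv {ι : Type*} [Fintype ι] {N : Matrix n n ℂ → Matrix n n ℂ} {p : ι → ℝ}
    {U : ι → Matrix n n ℂ} (hN : ∀ ρ, N ρ = ∑ i, (p i : ℂ) • (U i * ρ * (U i)ᴴ)) :
    choi N = ∑ i, (p i : ℂ) • dmv fun q => U i q.2 q.1 := by
  ext a b
  simp [choi, hN, dmv, Matrix.sum_apply, mul_apply, single_apply, conjTranspose_apply, ite_and]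

noncomputable def wernerHolevo (n : Type*) [Fintype n] [DecidableEq n] (ρ : Matrix n n ℂ) :
    Matrix n n ℂ :=
  ((Fintype.card n : ℂ) - 1)⁻¹ • (ρ.trace • 1 - ρᵀ)

theorem wernerHolevo_one (hn : Fintype.card n ≠ 1) : wernerHolevo n 1 = 1 := by
  have : (Fintype.card n : ℂ) - 1 ≠ 0 := sub_ne_zero.2 (by exact_mod_cast hn)
  have hsub : (Fintype.card n : ℂ) • (1 : Matrix n n ℂ) - 1 = ((Fintype.card n : ℂ) - 1) • 1 := by
    module
  rw [wernerHolevo, Matrix.trace_one, transpose_one, hsub, smul_smul, inv_mul_cancel₀ this,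
    one_smul]

theorem trace_wernerHolevo (hn : Fintype.card n ≠ 1) (ρ : Matrix n n ℂ) :
    (wernerHolevo n ρ).trace = ρ.trace := by
  have : (Fintype.card n : ℂ) - 1 ≠ 0 := sub_ne_zero.2 (by exact_mod_cast hn)
  simp only [wernerHolevo, trace_smul, trace_sub, Matrix.trace_one, trace_transpose, smul_eq_mul]
  field_simp

theorem choi_wernerHolevo :
    choi (wernerHolevo n) =
      ((Fintype.card n : ℂ) - 1)⁻¹ • (1 - Equiv.Perm.permMatrix ℂ (Equiv.prodComm n n)) := by
  ext ⟨a, b⟩ ⟨c, d⟩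
  by_cases hac : a = c <;> by_cases hbd : b = d <;>
    simp [choi, wernerHolevo, trace_single_eq_same, trace_single_eq_of_ne, one_apply, single_apply,
      PEquiv.toMatrix_apply, hac, hbd, eq_comm, and_comm]

theorem posSemidef_choi_wernerHolevo [Nonempty n] : (choi (wernerHolevo n)).PosSemidef := by
  have hinv : (Equiv.prodComm n n : Equiv.Perm (n × n))⁻¹ = Equiv.prodComm n n :=
    inv_eq_of_mul_eq_one_right (prodComm_mul_self n)
  rw [choi_wernerHolevo]
  refine (posSemidef_one_sub_of_isHermitian_of_mul_self_eq_one ?_ ?_).smul ?_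
  · rw [IsHermitian, conjTranspose_permMatrix, hinv]
  · rw [← permMatrix_mul, prodComm_mul_self n, permMatrix_one]
  · exact inv_nonneg.2 (sub_nonneg.2 (by exact_mod_cast Fintype.card_pos))

theorem choi_wernerHolevo_mulVec_eq_zero {x : n × n → ℂ} (hx : x ∘ Prod.swap = x) :
    choi (wernerHolevo n) *ᵥ x = 0 := by
  rw [choi_wernerHolevo, smul_mulVec, sub_mulVec, one_mulVec, permMatrix_mulVec]
  simp [hx]

theorem transpose_eq_neg_of_wernerHolevo_eq_sum {ι : Type*} [Fintype ι] {p : ι → ℝ}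
    (hp : ∀ i, 0 ≤ p i) {U : ι → Matrix n n ℂ}
    (hN : ∀ ρ, wernerHolevo n ρ = ∑ i, (p i : ℂ) • (U i * ρ * (U i)ᴴ)) {i : ι} (hi : p i ≠ 0) :
    (U i)ᵀ = -U i := by
  ext j k
  have hsymm : (Pi.single (j, k) 1 + Pi.single (k, j) 1 : n × n → ℂ) ∘ Prod.swap =
      Pi.single (j, k) 1 + Pi.single (k, j) 1 := by
    ext q
    simp [Pi.single_apply, Prod.swap_eq_iff_eq_swap, add_comm]
  have h := star_dotProduct_eq_zero_of_sum_dmv_mulVec_eq_zero hp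
    (choi_eq_sum_dmv hN ▸ choi_wernerHolevo_mulVec_eq_zero hsymm) hi
  simp only [dotProduct_add, dotProduct_single, Pi.star_apply, mul_one] at h
  rw [← star_add, star_eq_zero] at h
  simpa [eq_neg_iff_add_eq_zero] using h

theorem wernerHolevo_not_isMixedUnitary (hn : Odd (Fintype.card n)) :
    ¬ IsMixedUnitary (wernerHolevo n) := by
  rintro ⟨m, p, U, hp, hsum, hU, hN⟩
  obtain ⟨i, -, hi⟩ : ∃ i ∈ univ, p i ≠ 0 := exists_ne_zero_of_sum_ne_zero (by simp [hsum])
  have hdet : (U i).det ≠ 0 :=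
    ((isUnit_iff_isUnit_det _).1 (Unitary.isUnit_coe (U := ⟨U i, hU i⟩))).ne_zero
  exact hdet (det_eq_zero_of_transpose_eq_neg hn (transpose_eq_neg_of_wernerHolevo_eq_sum hp hN hi))

/-- the Werner–Holevo channel in dimension 3 is a unital trace-preserving
completely positive map which is not mixed unitary. -/
theorem stmt7 (N : Matrix (Fin 3) (Fin 3) ℂ → Matrix (Fin 3) (Fin 3) ℂ)
    (hN : ∀ ρ, N ρ = (2 : ℂ)⁻¹ • (ρ.trace • (1 : Matrix (Fin 3) (Fin 3) ℂ)) -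
      (2 : ℂ)⁻¹ • ρᵀ) :
    N 1 = 1 ∧ (∀ ρ, (N ρ).trace = ρ.trace) ∧ (choi N).PosSemidef ∧ ¬ IsMixedUnitary N := by
  obtain rfl : N = wernerHolevo (Fin 3) := by
    funext ρ
    rw [hN, wernerHolevo, smul_sub]
    norm_num
  exact ⟨wernerHolevo_one (by simp), trace_wernerHolevo (by simp), posSemidef_choi_wernerHolevo,
    wernerHolevo_not_isMixedUnitary (by decide)⟩
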